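/- arXiv:1702.02360 — 2 statements merged into one kernel-verified Lean document; each statement's English description precedes it below -/
import Mathlib

section
/- Let 1 ≤ l < m ≤ d be integers. Let P_m be the orthogonal projector of (ℂ^d)^{⊗m} onto the antisymmetric subspace Λ^m ℂ^d, and let π_m = binom(d,m)^{−1} P_m be the maximally mixed state on Λ^m ℂ^d; define π_{m−l} analogously on (ℂ^d)^{⊗(m−l)}. Then the partial trace of π_m over the last m − l tensor factors equals π_{m−l}: Tr_{l+1,…,m}[π_m] = π_{m−l}. -/
namespace Fermionic

open scoped BigOperators

noncomputable section

/-- The antisymmetry condition defining the fermionic subspace `Λ^k ℂ^d` inside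
`(ℂ^d)^{⊗ k}`, the latter being realized as the space of functions `(Fin k → Fin d) → ℂ`
(`(ℂ^d)^{⊗ k} ≅ ℂ^{d^k}`). -/
def IsAntisym (d k : ℕ) (ψ : (Fin k → Fin d) → ℂ) : Prop :=
  ∀ σ : Equiv.Perm (Fin k), ∀ x : Fin k → Fin d,
    ψ (x ∘ σ) = ((Equiv.Perm.sign σ : ℤ) : ℂ) * ψ x

/-- The symmetry condition defining the bosonic subspace `Sym^k ℂ^d` inside `(ℂ^d)^{⊗ k}`. -/
def IsSym (d k : ℕ) (ψ : (Fin k → Fin d) → ℂ) : Prop :=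
  ∀ σ : Equiv.Perm (Fin k), ∀ x : Fin k → Fin d, ψ (x ∘ σ) = ψ x

/-- The rank-one density matrix `|ψ⟩⟨ψ|` of a pure state `ψ`. -/
def pureState {ι : Type} (ψ : ι → ℂ) : Matrix ι ι ℂ :=
  fun x y => ψ x * star (ψ y)

/-- Concatenation of a `k`-tuple of indices with an `(N-k)`-tuple of indices. -/
def combine {d N k : ℕ} (a : Fin k → Fin d) (z : Fin (N - k) → Fin d) : Fin N → Fin d :=
  fun i => if h : (i : ℕ) < k then a ⟨i, h⟩ else z ⟨(i : ℕ) - k, by have := i.isLt; omega⟩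

/-- Partial trace `Tr_{k+1,…,N}` over the last `N - k` tensor factors, taking an operator on
`(ℂ^d)^{⊗ N}` to an operator on `(ℂ^d)^{⊗ k}`. -/
def ptrace {d N : ℕ} (k : ℕ) (ρ : Matrix (Fin N → Fin d) (Fin N → Fin d) ℂ) :
    Matrix (Fin k → Fin d) (Fin k → Fin d) ℂ :=
  fun a b => ∑ z : Fin (N - k) → Fin d, ρ (combine a z) (combine b z)

open Classical in
/-- Von Neumann entropy `S(ρ) = -Tr[ρ log ρ] = -∑ᵢ λᵢ log λᵢ` (natural logarithm),
defined via the eigenvalues of a Hermitian matrix (junk value `0` otherwise). -/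
def entropy {ι : Type} [Fintype ι] [DecidableEq ι] (ρ : Matrix ι ι ℂ) : ℝ :=
  if h : ρ.IsHermitian then -∑ i, h.eigenvalues i * Real.log (h.eigenvalues i) else 0

open Classical in
/-- Matrix logarithm of a Hermitian matrix, via the spectral decomposition (with the
convention `log 0 = 0` on the kernel; junk value `0` for non-Hermitian input). -/
def mlog {ι : Type} [Fintype ι] [DecidableEq ι] (ρ : Matrix ι ι ℂ) : Matrix ι ι ℂ :=
  if h : ρ.IsHermitian then
    (h.eigenvectorUnitary : Matrix ι ι ℂ) *
      Matrix.diagonal (fun i => (Real.log (h.eigenvalues i) : ℂ)) *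
      star (h.eigenvectorUnitary : Matrix ι ι ℂ)
  else 0

open Classical in
/-- Quantum relative entropy `D(ρ‖σ) = Tr[ρ (log ρ - log σ)]` if `ker σ ⊆ ker ρ`,
and `+∞` otherwise. -/
def relEntropy {ι : Type} [Fintype ι] [DecidableEq ι] (ρ σ : Matrix ι ι ℂ) : EReal :=
  if ∀ v : ι → ℂ, σ.mulVec v = 0 → ρ.mulVec v = 0 then
    (((ρ * (mlog ρ - mlog σ)).trace).re : EReal)
  else ⊤

/-- `P` is the orthogonal projector of `(ℂ^d)^{⊗ k}` onto the antisymmetric subspace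
`Λ^k ℂ^d`: it is Hermitian, idempotent, and its fixed points are exactly the
antisymmetric vectors. -/
def IsAntisymProj (d k : ℕ) (P : Matrix (Fin k → Fin d) (Fin k → Fin d) ℂ) : Prop :=
  P.IsHermitian ∧ P * P = P ∧
    ∀ ψ : (Fin k → Fin d) → ℂ, P.mulVec ψ = ψ ↔ IsAntisym d k ψ

/-- The operator `P ⊗ I` on `(ℂ^d)^{⊗ N} = (ℂ^d)^{⊗ k} ⊗ (ℂ^d)^{⊗ (N-k)}`,
for `P` an operator on the first `k` factors. -/
def tensorId {d N k : ℕ} (hk : k ≤ N) (P : Matrix (Fin k → Fin d) (Fin k → Fin d) ℂ) :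
    Matrix (Fin N → Fin d) (Fin N → Fin d) ℂ :=
  fun x y =>
    P (fun i => x (Fin.castLE hk i)) (fun i => y (Fin.castLE hk i)) *
      (if (fun i : Fin (N - k) => x ⟨k + i, by have := i.isLt; omega⟩) =
          (fun i : Fin (N - k) => y ⟨k + i, by have := i.isLt; omega⟩) then 1 else 0)

/-- The tensor product `A ⊗ B` of an operator `A` on `ℂ^d` with an operator `B` on
`(ℂ^d)^{⊗ k}`, as an operator on `(ℂ^d)^{⊗ (k+1)} = ℂ^d ⊗ (ℂ^d)^{⊗ k}`. -/
def kron1 {d k : ℕ} (A : Matrix (Fin 1 → Fin d) (Fin 1 → Fin d) ℂ)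
    (B : Matrix (Fin k → Fin d) (Fin k → Fin d) ℂ) :
    Matrix (Fin (k + 1) → Fin d) (Fin (k + 1) → Fin d) ℂ :=
  fun x y => A (fun _ => x 0) (fun _ => y 0) * B (Fin.tail x) (Fin.tail y)

/-- The normalized Slater determinant `φ_1 ∧ ⋯ ∧ φ_N` built from the vectors
`φ_1, …, φ_N ∈ ℂ^d`, as an element of `(ℂ^d)^{⊗ N}`. -/
def slater (d N : ℕ) (φ : Fin N → EuclideanSpace ℂ (Fin d)) : (Fin N → Fin d) → ℂ :=
  fun x => ((Real.sqrt N.factorial : ℝ) : ℂ)⁻¹ *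
    ∑ σ : Equiv.Perm (Fin N), ((Equiv.Perm.sign σ : ℤ) : ℂ) * ∏ i, φ (σ i) (x i)

section AuxProof

open Equiv Function

variable {d k : ℕ}

/-- sign of a permutation as a complex number -/
def sgn {k : ℕ} (σ : Equiv.Perm (Fin k)) : ℂ := ((Equiv.Perm.sign σ : ℤ) : ℂ)

lemma sgn_mul (σ τ : Equiv.Perm (Fin k)) : sgn (σ * τ) = sgn σ * sgn τ := by
  simp [sgn, ← Int.cast_mul, ← Units.val_mul]

lemma sgn_sq (σ : Equiv.Perm (Fin k)) : sgn σ * sgn σ = 1 := by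
  simp [sgn, ← Int.cast_mul, ← Units.val_mul]

lemma star_sgn (σ : Equiv.Perm (Fin k)) : star (sgn σ) = sgn σ := by
  simp [sgn]

/-- unnormalized antisymmetrizer entry -/
def Ssum (d k : ℕ) (x y : Fin k → Fin d) : ℂ :=
  ∑ σ : Equiv.Perm (Fin k), sgn σ * (if y = x ∘ ⇑σ then 1 else 0)

/-- the antisymmetrizer matrix -/
def asym (d k : ℕ) : Matrix (Fin k → Fin d) (Fin k → Fin d) ℂ :=
  fun x y => ((k.factorial : ℂ))⁻¹ * Ssum d k x y

lemma perm_eq_of_comp {x : Fin k → Fin d} (hx : Injective x) {σ τ : Equiv.Perm (Fin k)}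
    (h : x ∘ ⇑σ = x ∘ ⇑τ) : σ = τ :=
  Equiv.ext fun i => hx (congrFun h i)

lemma Ssum_cancel {x : Fin k → Fin d} (h : ¬ Injective x) (y : Fin k → Fin d) :
    Ssum d k x y = 0 := by
  obtain ⟨i, j, hxij, hij⟩ := Function.not_injective_iff.mp h
  set τ := Equiv.swap i j with hτ
  have hxτ : x ∘ ⇑τ = x := by
    funext t
    by_cases h1 : t = i
    · simp [hτ, h1, Equiv.swap_apply_left, hxij]
    · by_cases h2 : t = j
      · simp [hτ, h2, Equiv.swap_apply_right, hxij]
      · simp [hτ, Equiv.swap_apply_of_ne_of_ne h1 h2]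
  have key : Ssum d k x y = - Ssum d k x y := by
    calc Ssum d k x y
        = ∑ σ : Equiv.Perm (Fin k), sgn (τ * σ) * (if y = x ∘ ⇑(τ * σ) then 1 else 0) := by
          refine (Fintype.sum_equiv (Equiv.mulLeft τ)
            (fun σ => sgn (τ * σ) * (if y = x ∘ ⇑(τ * σ) then 1 else 0))
            (fun σ => sgn σ * (if y = x ∘ ⇑σ then 1 else 0)) (fun σ => rfl)).symm
      _ = - Ssum d k x y := by
          rw [Ssum, ← Finset.sum_neg_distrib]
          refine Finset.sum_congr rfl fun σ _ => ?_
          have h1 : sgn (τ * σ) = - sgn σ := by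
            rw [sgn_mul]
            have : sgn τ = -1 := by simp [sgn, hτ, Equiv.Perm.sign_swap hij]
            rw [this]; ring
          have h2 : x ∘ ⇑(τ * σ) = x ∘ ⇑σ := by
            rw [Equiv.Perm.coe_mul, ← Function.comp_assoc, hxτ]
          rw [h1, h2]; ring
  linear_combination key / 2

lemma Ssum_unique {x y : Fin k → Fin d} (hx : Injective x) (σ₀ : Equiv.Perm (Fin k))
    (h : y = x ∘ ⇑σ₀) : Ssum d k x y = sgn σ₀ := by
  rw [Ssum, Finset.sum_eq_single σ₀]
  · rw [if_pos h, mul_one]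
  · intro σ _ hσ
    rw [if_neg, mul_zero]
    intro hy
    exact hσ (perm_eq_of_comp hx (hy ▸ h : x ∘ ⇑σ = x ∘ ⇑σ₀))
  · intro h; exact absurd (Finset.mem_univ σ₀) h

lemma Ssum_empty {x y : Fin k → Fin d} (h : ∀ σ : Equiv.Perm (Fin k), y ≠ x ∘ ⇑σ) :
    Ssum d k x y = 0 := by
  rw [Ssum]
  refine Finset.sum_eq_zero fun σ _ => ?_
  rw [if_neg (h σ), mul_zero]

end AuxProof
section AuxProj

open Equiv Function

variable {d k : ℕ}

lemma Ssum_comm (x y : Fin k → Fin d) : Ssum d k x y = Ssum d k y x := by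
  rw [Ssum, Ssum]
  refine Fintype.sum_equiv (Equiv.inv (Equiv.Perm (Fin k))) _ _ fun σ => ?_
  simp only [Equiv.inv_apply]
  have h1 : sgn σ = sgn σ⁻¹ := by simp [sgn]
  have h2 : (y = x ∘ ⇑σ) ↔ (x = y ∘ ⇑σ⁻¹) := by
    constructor
    · rintro rfl; funext i; simp
    · rintro rfl; funext i; simp
  rw [h1]
  congr 1
  simp only [h2]

lemma star_Ssum (x y : Fin k → Fin d) : star (Ssum d k x y) = Ssum d k x y := by
  rw [Ssum, star_sum]
  refine Finset.sum_congr rfl fun σ _ => ?_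
  rw [star_mul', star_sgn]
  congr 1
  split <;> simp

lemma Ssum_comp (x y : Fin k → Fin d) (σ : Equiv.Perm (Fin k)) :
    Ssum d k (x ∘ ⇑σ) y = sgn σ * Ssum d k x y := by
  rw [Ssum, Ssum, Finset.mul_sum]
  refine Fintype.sum_equiv (Equiv.mulLeft σ) _ _ fun τ => ?_
  simp only [Equiv.coe_mulLeft]
  have h1 : sgn τ = sgn σ * sgn (σ * τ) := by
    rw [sgn_mul, ← mul_assoc, sgn_sq, one_mul]
  rw [h1, mul_assoc]
  congr 2

lemma asym_isHermitian : (asym d k).IsHermitian := by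
  refine Matrix.IsHermitian.ext fun x y => ?_
  have hst : star ((k.factorial : ℂ))⁻¹ = ((k.factorial : ℂ))⁻¹ := by simp
  rw [asym, asym, star_mul', star_Ssum, Ssum_comm, hst, mul_comm]

lemma asym_mul_asym : asym d k * asym d k = asym d k := by
  ext x y
  show ∑ w, asym d k x w * asym d k w y = asym d k x y
  have key : ∑ w, Ssum d k x w * Ssum d k w y = (k.factorial : ℂ) * Ssum d k x y := by
    calc ∑ w, Ssum d k x w * Ssum d k w y
        = ∑ w, ∑ σ : Equiv.Perm (Fin k),
            (if w = x ∘ ⇑σ then sgn σ * Ssum d k w y else 0) := by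
          refine Finset.sum_congr rfl fun w _ => ?_
          rw [Ssum, Finset.sum_mul]
          refine Finset.sum_congr rfl fun σ _ => ?_
          split <;> ring
      _ = ∑ σ : Equiv.Perm (Fin k), ∑ w,
            (if w = x ∘ ⇑σ then sgn σ * Ssum d k w y else 0) := Finset.sum_comm
      _ = ∑ σ : Equiv.Perm (Fin k), sgn σ * Ssum d k (x ∘ ⇑σ) y := by
          refine Finset.sum_congr rfl fun σ _ => ?_
          rw [Finset.sum_ite_eq' Finset.univ (x ∘ ⇑σ) (fun w => sgn σ * Ssum d k w y)]
          simp
      _ = ∑ σ : Equiv.Perm (Fin k), Ssum d k x y := by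
          refine Finset.sum_congr rfl fun σ _ => ?_
          rw [Ssum_comp, ← mul_assoc, sgn_sq, one_mul]
      _ = (k.factorial : ℂ) * Ssum d k x y := by
          rw [Finset.sum_const, Finset.card_univ, Fintype.card_perm, Fintype.card_fin,
            nsmul_eq_mul]
  have hk : ((k.factorial : ℕ) : ℂ) ≠ 0 := Nat.cast_ne_zero.mpr k.factorial_ne_zero
  calc ∑ w, asym d k x w * asym d k w y
      = (k.factorial : ℂ)⁻¹ * (k.factorial : ℂ)⁻¹ * ∑ w, Ssum d k x w * Ssum d k w y := by
        rw [Finset.mul_sum]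
        refine Finset.sum_congr rfl fun w _ => ?_
        rw [asym, asym]; ring
    _ = asym d k x y := by rw [key, asym]; field_simp
end AuxProj
section AuxUnique

open Equiv Function

variable {d k : ℕ}

lemma asym_mulVec (ψ : (Fin k → Fin d) → ℂ) (x : Fin k → Fin d) :
    (asym d k).mulVec ψ x = (k.factorial : ℂ)⁻¹ * ∑ σ : Equiv.Perm (Fin k), sgn σ * ψ (x ∘ ⇑σ) := by
  rw [Matrix.mulVec, dotProduct]
  calc ∑ y, asym d k x y * ψ y
      = (k.factorial : ℂ)⁻¹ * ∑ y, ∑ σ : Equiv.Perm (Fin k),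
          (if y = x ∘ ⇑σ then sgn σ * ψ y else 0) := by
        rw [Finset.mul_sum]
        refine Finset.sum_congr rfl fun y _ => ?_
        rw [asym, Ssum, mul_assoc, Finset.sum_mul]
        congr 1
        refine Finset.sum_congr rfl fun σ _ => ?_
        split <;> ring
    _ = (k.factorial : ℂ)⁻¹ * ∑ σ : Equiv.Perm (Fin k), sgn σ * ψ (x ∘ ⇑σ) := by
        congr 1
        rw [Finset.sum_comm]
        refine Finset.sum_congr rfl fun σ _ => ?_
        rw [Finset.sum_ite_eq' Finset.univ (x ∘ ⇑σ) (fun y => sgn σ * ψ y)]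
        simp

lemma asym_fixed (ψ : (Fin k → Fin d) → ℂ) :
    (asym d k).mulVec ψ = ψ ↔ IsAntisym d k ψ := by
  have hk : ((k.factorial : ℕ) : ℂ) ≠ 0 := Nat.cast_ne_zero.mpr k.factorial_ne_zero
  constructor
  · intro hfix σ₀ x
    have h1 : ψ (x ∘ ⇑σ₀) = (asym d k).mulVec ψ (x ∘ ⇑σ₀) := by rw [hfix]
    have h2 : ψ x = (asym d k).mulVec ψ x := by rw [hfix]
    rw [asym_mulVec] at h1 h2
    have key : ∑ σ : Equiv.Perm (Fin k), sgn σ * ψ ((x ∘ ⇑σ₀) ∘ ⇑σ)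
        = sgn σ₀ * ∑ σ : Equiv.Perm (Fin k), sgn σ * ψ (x ∘ ⇑σ) := by
      rw [Finset.mul_sum]
      refine Fintype.sum_equiv (Equiv.mulLeft σ₀) _ _ fun τ => ?_
      simp only [Equiv.coe_mulLeft]
      have h3 : sgn τ = sgn σ₀ * sgn (σ₀ * τ) := by
        rw [sgn_mul, ← mul_assoc, sgn_sq, one_mul]
      have h4 : (x ∘ ⇑σ₀) ∘ ⇑τ = x ∘ ⇑(σ₀ * τ) := rfl
      rw [h3, h4, mul_assoc]
    rw [key] at h1
    rw [h1, h2]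
    show _ = sgn σ₀ * _
    ring
  · intro hψ
    funext x
    rw [asym_mulVec]
    have : ∀ σ : Equiv.Perm (Fin k), sgn σ * ψ (x ∘ ⇑σ) = ψ x := fun σ => by
      rw [hψ σ x]
      show sgn σ * (sgn σ * ψ x) = ψ x
      rw [← mul_assoc, sgn_sq, one_mul]
    rw [Finset.sum_congr rfl fun σ _ => this σ, Finset.sum_const, Finset.card_univ,
      Fintype.card_perm, Fintype.card_fin, nsmul_eq_mul]
    field_simp

lemma asym_isAntisymProj : IsAntisymProj d k (asym d k) :=
  ⟨asym_isHermitian, asym_mul_asym, asym_fixed⟩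

lemma ext_of_mulVec {ι : Type} [Fintype ι] [DecidableEq ι] {A B : Matrix ι ι ℂ}
    (h : ∀ v, A.mulVec v = B.mulVec v) : A = B := by
  ext i j
  have := congrFun (h (Pi.single j 1)) i
  simpa [Matrix.mulVec_single] using this

lemma isAntisymProj_unique {P : Matrix (Fin k → Fin d) (Fin k → Fin d) ℂ}
    (hP : IsAntisymProj d k P) : P = asym d k := by
  obtain ⟨hH, hI, hF⟩ := hP
  have hA := asym_isAntisymProj (d := d) (k := k)
  -- asym * P = P
  have h1 : asym d k * P = P := by
    refine ext_of_mulVec fun v => ?_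
    rw [← Matrix.mulVec_mulVec]
    have hanti : IsAntisym d k (P.mulVec v) := by
      rw [← hF]
      rw [Matrix.mulVec_mulVec, hI]
    exact (asym_fixed _).mpr hanti
  -- P * asym = asym
  have h2 : P * asym d k = asym d k := by
    refine ext_of_mulVec fun v => ?_
    rw [← Matrix.mulVec_mulVec]
    have hanti : IsAntisym d k ((asym d k).mulVec v) := by
      rw [← asym_fixed]
      rw [Matrix.mulVec_mulVec, asym_mul_asym]
    exact (hF _).mpr hanti
  have h3 : P * asym d k = P := by
    have := congrArg Matrix.conjTranspose h1
    rwa [Matrix.conjTranspose_mul, hH.eq, asym_isHermitian.eq] at this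
  rw [← h2, h3]

end AuxUnique
section AuxCombine

open Function

variable {d l m : ℕ}

/-- index in the "high" block -/
def padIdx {l m : ℕ} (i : Fin (m - l)) : Fin m := ⟨l + i, by have := i.isLt; omega⟩

lemma combine_low (hlm : l ≤ m) (a : Fin l → Fin d) (z : Fin (m - l) → Fin d) (i : Fin l) :
    combine (N := m) a z (Fin.castLE hlm i) = a i := by
  have h : ((Fin.castLE hlm i : Fin m) : ℕ) < l := i.isLt
  rw [combine, dif_pos h]
  congr 1

lemma combine_padIdx (a : Fin l → Fin d) (z : Fin (m - l) → Fin d) (i : Fin (m - l)) :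
    combine (N := m) a z (padIdx i) = z i := by
  have h : ¬ ((padIdx i : Fin m) : ℕ) < l := by simp [padIdx]
  rw [combine, dif_neg h]
  congr 1
  exact Fin.ext (by simp [padIdx])

lemma padIdx_ne_castLE (hlm : l ≤ m) (i : Fin (m - l)) (j : Fin l) :
    padIdx i ≠ Fin.castLE hlm j := by
  intro h
  have : l + (i : ℕ) = (j : ℕ) := congrArg Fin.val h
  have := j.isLt
  omega

lemma inj_of_combine_inj (hlm : l ≤ m) {a : Fin l → Fin d} {z : Fin (m - l) → Fin d}
    (h : Injective (combine (N := m) a z)) : Injective a := by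
  intro i j hij
  have : combine (N := m) a z (Fin.castLE hlm i) = combine (N := m) a z (Fin.castLE hlm j) := by
    rw [combine_low hlm, combine_low hlm, hij]
  have := h this
  exact Fin.castLE_injective hlm this

lemma zinj_of_combine_inj {a : Fin l → Fin d} {z : Fin (m - l) → Fin d}
    (h : Injective (combine (N := m) a z)) : Injective z := by
  intro i j hij
  have : combine (N := m) a z (padIdx i) = combine (N := m) a z (padIdx j) := by
    rw [combine_padIdx, combine_padIdx, hij]
  have := h this
  have := congrArg Fin.val this
  simp only [padIdx] at this
  exact Fin.ext (by omega)

lemma notrange_of_combine_inj (hlm : l ≤ m) {a : Fin l → Fin d} {z : Fin (m - l) → Fin d}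
    (h : Injective (combine (N := m) a z)) (i : Fin (m - l)) (j : Fin l) : a j ≠ z i := by
  intro hne
  have : combine (N := m) a z (Fin.castLE hlm j) = combine (N := m) a z (padIdx i) := by
    rw [combine_low hlm, combine_padIdx, hne]
  exact padIdx_ne_castLE hlm i j (h this).symm

lemma combine_inj (hlm : l ≤ m) {a : Fin l → Fin d} {z : Fin (m - l) → Fin d}
    (ha : Injective a) (hz : Injective z) (hd : ∀ i j, a j ≠ z i) :
    Injective (combine (N := m) a z) := by
  intro p q hpq
  rw [combine, combine] at hpq
  by_cases h1 : (p : ℕ) < l <;> by_cases h2 : (q : ℕ) < l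
  · rw [dif_pos h1, dif_pos h2] at hpq
    have hv := ha hpq
    rw [Fin.mk.injEq] at hv
    exact Fin.ext hv
  · rw [dif_pos h1, dif_neg h2] at hpq
    exact absurd hpq (hd _ _)
  · rw [dif_neg h1, dif_pos h2] at hpq
    exact absurd hpq.symm (hd _ _)
  · rw [dif_neg h1, dif_neg h2] at hpq
    have := congrArg Fin.val (hz hpq)
    have hp := p.isLt
    have hq := q.isLt
    simp only at this
    exact Fin.ext (by omega)

open Classical in
lemma card_good (hlm : l ≤ m) {a : Fin l → Fin d} (ha : Injective a) :
    Fintype.card {z : Fin (m - l) → Fin d // Injective (combine (N := m) a z)}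
      = (d - l).descFactorial (m - l) := by
  have e : {z : Fin (m - l) → Fin d // Injective (combine (N := m) a z)}
      ≃ (Fin (m - l) ↪ {c : Fin d // ¬ c ∈ Set.range a}) :=
    { toFun := fun zz =>
        ⟨fun i => ⟨zz.1 i, by
            rintro ⟨j, hj⟩
            exact notrange_of_combine_inj hlm zz.2 i j hj⟩,
          fun i j hij => zinj_of_combine_inj zz.2 (congrArg Subtype.val hij)⟩
      invFun := fun f =>
        ⟨fun i => (f i : Fin d), by
          refine combine_inj hlm ha (fun i j hij => f.injective (Subtype.ext hij)) ?_
          intro i j hij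
          exact (f i).2 ⟨j, hij⟩⟩
      left_inv := fun zz => by ext i; rfl
      right_inv := fun f => by ext i; rfl }
  rw [Fintype.card_congr e, Fintype.card_embedding_eq, Fintype.card_fin]
  congr 1
  rw [Fintype.card_subtype_compl, Fintype.card_fin]
  congr 1
  exact (Fintype.card_congr (Equiv.refl _)).trans
    ((Set.card_range_of_injective ha).trans (Fintype.card_fin l))

end AuxCombine
section AuxKey

open Function

variable {d l m : ℕ}

def lowEquiv (hlm : l ≤ m) : Fin l ≃ {i : Fin m // (i : ℕ) < l} where
  toFun := fun i => ⟨Fin.castLE hlm i, i.isLt⟩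
  invFun := fun i => ⟨(i.1 : ℕ), i.2⟩
  left_inv := fun i => rfl
  right_inv := fun i => rfl

open Classical in
lemma extend_castLE (hlm : l ≤ m) (τ : Equiv.Perm (Fin l)) (i : Fin l) :
    (τ.extendDomain (lowEquiv hlm)) (Fin.castLE hlm i) = Fin.castLE hlm (τ i) := by
  have h : ((Fin.castLE hlm i : Fin m) : ℕ) < l := i.isLt
  rw [Equiv.Perm.extendDomain_apply_subtype τ (lowEquiv hlm) h]
  rfl

open Classical in
lemma extend_padIdx (hlm : l ≤ m) (τ : Equiv.Perm (Fin l)) (i : Fin (m - l)) :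
    (τ.extendDomain (lowEquiv hlm)) (padIdx i) = padIdx i := by
  refine Equiv.Perm.extendDomain_apply_not_subtype τ (lowEquiv hlm) ?_
  simp [padIdx]

lemma combine_comp_extend (hlm : l ≤ m) {a b : Fin l → Fin d} {z : Fin (m - l) → Fin d}
    {τ : Equiv.Perm (Fin l)} (hτ : b = a ∘ ⇑τ) :
    combine (N := m) b z = combine (N := m) a z ∘ ⇑(τ.extendDomain (lowEquiv hlm)) := by
  funext j
  by_cases hj : (j : ℕ) < l
  · have hj' : j = Fin.castLE hlm ⟨(j : ℕ), hj⟩ := Fin.ext rfl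
    rw [hj']
    rw [Function.comp_apply, extend_castLE hlm, combine_low hlm, combine_low hlm, hτ]
    rfl
  · have hjm := j.isLt
    have hj' : j = padIdx (l := l) ⟨(j : ℕ) - l, by omega⟩ := Fin.ext (by simp [padIdx]; omega)
    rw [hj']
    rw [Function.comp_apply, extend_padIdx hlm, combine_padIdx, combine_padIdx]

lemma exists_perm_of_comp (hlm : l ≤ m) {a b : Fin l → Fin d} {z : Fin (m - l) → Fin d}
    (ha : Injective a) (hz : Injective (combine (N := m) a z))
    {σ : Equiv.Perm (Fin m)} (hσ : combine (N := m) b z = combine (N := m) a z ∘ ⇑σ) :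
    ∃ τ : Equiv.Perm (Fin l), b = a ∘ ⇑τ := by
  have hfix : ∀ i : Fin (m - l), σ (padIdx i) = padIdx i := by
    intro i
    refine hz ?_
    have h1 : combine (N := m) a z (σ (padIdx i)) = combine (N := m) b z (padIdx i) := by
      rw [hσ]; rfl
    rw [h1, combine_padIdx, combine_padIdx]
  have hlow : ∀ i : Fin l, (σ (Fin.castLE hlm i) : ℕ) < l := by
    intro i
    by_contra hc
    have hJ := (σ (Fin.castLE hlm i)).isLt
    set i₀ : Fin (m - l) := ⟨(σ (Fin.castLE hlm i) : ℕ) - l, by omega⟩ with hi₀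
    have hpad : padIdx (l := l) i₀ = σ (Fin.castLE hlm i) := Fin.ext (by simp [padIdx, hi₀]; omega)
    have := σ.injective ((hfix i₀).trans hpad)
    exact padIdx_ne_castLE hlm i₀ i this
  set τ₀ : Fin l → Fin l := fun i => ⟨(σ (Fin.castLE hlm i) : ℕ), hlow i⟩ with hτ₀
  have hinj : Injective τ₀ := by
    intro i j hij
    have hv := congrArg Fin.val hij
    have h1 : σ (Fin.castLE hlm i) = σ (Fin.castLE hlm j) := Fin.ext hv
    exact Fin.castLE_injective hlm (σ.injective h1)
  refine ⟨Equiv.ofBijective τ₀ (Finite.injective_iff_bijective.mp hinj), ?_⟩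
  funext i
  have h1 : b i = combine (N := m) b z (Fin.castLE hlm i) := (combine_low hlm b z i).symm
  have h2 : σ (Fin.castLE hlm i) = Fin.castLE hlm (τ₀ i) := Fin.ext rfl
  rw [h1, hσ, Function.comp_apply, h2, combine_low hlm]
  rfl

open Classical in
lemma Ssum_combine (hlm : l ≤ m) {a b : Fin l → Fin d} {z : Fin (m - l) → Fin d}
    (ha : Injective a) (hz : Injective (combine (N := m) a z)) :
    Ssum d m (combine (N := m) a z) (combine (N := m) b z) = Ssum d l a b := by
  by_cases hex : ∃ τ : Equiv.Perm (Fin l), b = a ∘ ⇑τ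
  · obtain ⟨τ, hτ⟩ := hex
    rw [Ssum_unique ha τ hτ,
      Ssum_unique hz (τ.extendDomain (lowEquiv hlm)) (combine_comp_extend hlm hτ)]
    simp [sgn]
  · rw [Ssum_empty (fun τ h => hex ⟨τ, h⟩),
      Ssum_empty (fun σ h => hex (exists_perm_of_comp hlm ha hz h))]

open Classical in
lemma sum_Ssum (hlm : l ≤ m) (a b : Fin l → Fin d) :
    ∑ z : Fin (m - l) → Fin d, Ssum d m (combine (N := m) a z) (combine (N := m) b z)
      = ((d - l).descFactorial (m - l) : ℂ) * Ssum d l a b := by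
  by_cases ha : Injective a
  · have step : ∀ z : Fin (m - l) → Fin d,
        Ssum d m (combine (N := m) a z) (combine (N := m) b z)
          = if Injective (combine (N := m) a z) then Ssum d l a b else 0 := by
      intro z
      by_cases hz : Injective (combine (N := m) a z)
      · rw [if_pos hz, Ssum_combine hlm ha hz]
      · rw [if_neg hz, Ssum_cancel hz]
    rw [Finset.sum_congr rfl fun z _ => step z, Finset.sum_ite, Finset.sum_const,
      Finset.sum_const_zero, add_zero, ← Fintype.card_subtype, card_good hlm ha, nsmul_eq_mul]
  · have h0 : ∀ z : Fin (m - l) → Fin d, ¬ Injective (combine (N := m) a z) :=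
      fun z h => ha (inj_of_combine_inj hlm h)
    rw [Finset.sum_congr rfl fun z _ => Ssum_cancel (h0 z) _, Finset.sum_const_zero,
      Ssum_cancel ha, mul_zero]

lemma descFactorial_split (d l : ℕ) :
    ∀ k, d.descFactorial l * (d - l).descFactorial k = d.descFactorial (l + k)
  | 0 => by simp
  | (k + 1) => by
      rw [Nat.descFactorial_succ, show l + (k + 1) = (l + k) + 1 from rfl,
        Nat.descFactorial_succ, ← descFactorial_split d l k, Nat.sub_sub]
      ring

lemma ptrace_asym (hlm : l ≤ m) (hmd : m ≤ d) :
    ptrace l (((d.choose m : ℕ) : ℂ)⁻¹ • asym d m) = ((d.choose l : ℕ) : ℂ)⁻¹ • asym d l := by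
  have hld : l ≤ d := hlm.trans hmd
  have hCm : ((d.choose m : ℕ) : ℂ) ≠ 0 := Nat.cast_ne_zero.mpr (Nat.choose_pos hmd).ne'
  have hCl : ((d.choose l : ℕ) : ℂ) ≠ 0 := Nat.cast_ne_zero.mpr (Nat.choose_pos hld).ne'
  have hmf : ((m.factorial : ℕ) : ℂ) ≠ 0 := Nat.cast_ne_zero.mpr m.factorial_ne_zero
  have hlf : ((l.factorial : ℕ) : ℂ) ≠ 0 := Nat.cast_ne_zero.mpr l.factorial_ne_zero
  have hnat : d.choose l * l.factorial * (d - l).descFactorial (m - l)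
      = d.choose m * m.factorial := by
    have h3 := descFactorial_split d l (m - l)
    rw [show l + (m - l) = m by omega] at h3
    calc d.choose l * l.factorial * (d - l).descFactorial (m - l)
        = d.descFactorial l * (d - l).descFactorial (m - l) := by
          rw [Nat.descFactorial_eq_factorial_mul_choose d l]; ring
      _ = d.descFactorial m := h3
      _ = d.choose m * m.factorial := by
          rw [Nat.descFactorial_eq_factorial_mul_choose d m]; ring
  have hnatC : ((d.choose l : ℕ) : ℂ) * (l.factorial : ℂ) * ((d - l).descFactorial (m - l) : ℂ)
      = ((d.choose m : ℕ) : ℂ) * (m.factorial : ℂ) := by exact_mod_cast congrArg Nat.cast hnat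
  ext a b
  show (∑ z : Fin (m - l) → Fin d,
      (((d.choose m : ℕ) : ℂ)⁻¹ • asym d m) (combine a z) (combine b z))
    = (((d.choose l : ℕ) : ℂ)⁻¹ • asym d l) a b
  calc (∑ z : Fin (m - l) → Fin d,
        (((d.choose m : ℕ) : ℂ)⁻¹ • asym d m) (combine a z) (combine b z))
      = ((d.choose m : ℕ) : ℂ)⁻¹ * (m.factorial : ℂ)⁻¹ *
          ∑ z : Fin (m - l) → Fin d, Ssum d m (combine a z) (combine b z) := by
        rw [Finset.mul_sum]
        refine Finset.sum_congr rfl fun z _ => ?_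
        rw [Matrix.smul_apply, asym, smul_eq_mul]
        ring
    _ = ((d.choose m : ℕ) : ℂ)⁻¹ * (m.factorial : ℂ)⁻¹ *
          (((d - l).descFactorial (m - l) : ℂ) * Ssum d l a b) := by rw [sum_Ssum hlm a b]
    _ = (((d.choose l : ℕ) : ℂ)⁻¹ • asym d l) a b := by
        rw [Matrix.smul_apply, asym, smul_eq_mul]
        have hsc : ((d.choose m : ℕ) : ℂ)⁻¹ * (m.factorial : ℂ)⁻¹ *
            ((d - l).descFactorial (m - l) : ℂ)
            = ((d.choose l : ℕ) : ℂ)⁻¹ * ((l.factorial : ℕ) : ℂ)⁻¹ := by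
          field_simp
          linear_combination hnatC
        calc ((d.choose m : ℕ) : ℂ)⁻¹ * (m.factorial : ℂ)⁻¹ *
              (((d - l).descFactorial (m - l) : ℂ) * Ssum d l a b)
            = (((d.choose m : ℕ) : ℂ)⁻¹ * (m.factorial : ℂ)⁻¹ *
                ((d - l).descFactorial (m - l) : ℂ)) * Ssum d l a b := by ring
          _ = _ := by rw [hsc]; ring

end AuxKey

/-- **Partial trace of the maximally mixed state on the antisymmetric subspace.**
For `1 ≤ l < m ≤ d`, the partial trace of `π_m = (d choose m)⁻¹ P_m` over the last
`m - l` tensor factors is the maximally mixed state on `Λ^l ℂ^d`; equivalently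
(tracing down to `m - l` factors), one obtains `π_(m-l)`. -/
theorem ptrace_maximallyMixed_antisym (d l m : ℕ) (hl : 1 ≤ l) (hlm : l < m) (hmd : m ≤ d)
    (Pm : Matrix (Fin m → Fin d) (Fin m → Fin d) ℂ) (hPm : IsAntisymProj d m Pm)
    (Pl : Matrix (Fin l → Fin d) (Fin l → Fin d) ℂ) (hPl : IsAntisymProj d l Pl)
    (Pml : Matrix (Fin (m - l) → Fin d) (Fin (m - l) → Fin d) ℂ)
    (hPml : IsAntisymProj d (m - l) Pml) :
    ptrace l (((d.choose m : ℕ) : ℂ)⁻¹ • Pm) = ((d.choose l : ℕ) : ℂ)⁻¹ • Pl ∧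
    ptrace (m - l) (((d.choose m : ℕ) : ℂ)⁻¹ • Pm) = ((d.choose (m - l) : ℕ) : ℂ)⁻¹ • Pml := by
  rw [isAntisymProj_unique hPm, isAntisymProj_unique hPl, isAntisymProj_unique hPml]
  exact ⟨ptrace_asym hlm.le hmd, ptrace_asym (Nat.sub_le m l) hmd⟩

end

end Fermionic
end

section
/- (Coleman's theorem.) Let 1 ≤ N ≤ d be integers and let Ψ_N be a unit vector in the antisymmetric subspace Λ^N ℂ^d ⊂ (ℂ^d)^{⊗N}, with ρ_N = |Ψ_N⟩⟨Ψ_N| and one-body reduced density matrix γ_1 = Tr_{2,…,N}[ρ_N]. Then S(γ_1) ≥ log N, with equality for Slater determinants. -/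
namespace Fermionic

open scoped BigOperators

noncomputable section

/-!
Let `γ` be the one-body density matrix of `ψ` and `f ∈ ℂ^d` a unit vector. Writing `P_j` for
`|f⟩⟨f|` acting on the `j`-th tensor factor, `⟨f, γ f⟩ = ⟨ψ, P_1 ψ⟩`, and antisymmetry makes
`⟨ψ, P_j ψ⟩ =: r` independent of `j` and forces `P_j P_k ψ = 0` for `j ≠ k`. So the vectors
`P_j ψ` are pairwise orthogonal with `‖P_j ψ‖² = r`, and Cauchy–Schwarz for `ψ` and `∑_j P_j ψ`
gives `(N r)² ≤ N r`, i.e. `r ≤ 1/N`. Hence the eigenvalues of `γ` lie in `[0, 1/N]` and sum to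
`1`, which forces `S(γ) ≥ log N`.

For a Slater determinant of orthonormal `φ_k`, expanding along the first factor shows
`γ = N⁻¹ ∑_k |φ_k⟩⟨φ_k|`, whose eigenvalues are `0` and `1/N`; so `S(γ) = log N`.
-/

open Matrix Function

section Entropy

variable {ι : Type*} [Fintype ι]

lemma log_le_neg_sum_mul_log {p : ι → ℝ} {c : ℝ} (hc : 0 < c) (hp0 : ∀ i, 0 ≤ p i)
    (hpc : ∀ i, c * p i ≤ 1) (hp : ∑ i, p i = 1) :
    Real.log c ≤ -∑ i, p i * Real.log (p i) := by
  calc Real.log c = ∑ i, p i * Real.log c := by rw [← Finset.sum_mul, hp, one_mul]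
    _ ≤ ∑ i, -(p i * Real.log (p i)) := Finset.sum_le_sum fun i _ => by
        rcases (hp0 i).eq_or_lt with h | h
        · simp [← h]
        · have : Real.log c + Real.log (p i) ≤ 0 := by
            rw [← Real.log_mul hc.ne' h.ne']
            exact Real.log_nonpos (by positivity) (hpc i)
          nlinarith
    _ = -∑ i, p i * Real.log (p i) := Finset.sum_neg_distrib _

lemma neg_sum_mul_log_eq_log {p : ι → ℝ} {c : ℝ} (hpc : ∀ i, p i = 0 ∨ p i = c⁻¹)
    (hp : ∑ i, p i = 1) :
    -∑ i, p i * Real.log (p i) = Real.log c := by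
  have hterm : ∀ i, p i * Real.log (p i) = -(p i * Real.log c) := fun i => by
    rcases hpc i with h | h <;> simp [h, Real.log_inv]
  simp [hterm, ← Finset.sum_mul, hp]

end Entropy

lemma _root_.Matrix.IsHermitian.eigenvalues_eq_zero_or_eq {𝕜 n : Type*} [RCLike 𝕜] [Fintype n]
    [DecidableEq n] {A : Matrix n n 𝕜} (hA : A.IsHermitian) {ν : ℝ} (h : A * A = (ν : 𝕜) • A)
    (i : n) : hA.eigenvalues i = 0 ∨ hA.eigenvalues i = ν := by
  have he : ⇑(hA.eigenvectorBasis i) ≠ 0 := fun h0 =>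
    hA.eigenvectorBasis.orthonormal.ne_zero i (by simpa using congrArg (WithLp.toLp 2) h0)
  have h1 := congrArg (· *ᵥ ⇑(hA.eigenvectorBasis i)) h
  simp only [← mulVec_mulVec, smul_mulVec, hA.mulVec_eigenvectorBasis, mulVec_smul] at h1
  rw [← RCLike.real_smul_eq_coe_smul (K := 𝕜), smul_smul, smul_smul, ← sub_eq_zero, ← sub_smul,
    smul_eq_zero] at h1
  have : hA.eigenvalues i * (hA.eigenvalues i - ν) = 0 := by
    linear_combination (h1.resolve_right he)
  simpa [sub_eq_zero] using this

lemma sum_eigenvalues_eq_one {ι : Type*} [Fintype ι] [DecidableEq ι] {A : Matrix ι ι ℂ}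
    (hA : A.IsHermitian) (htr : A.trace = 1) : ∑ i, hA.eigenvalues i = 1 := by
  have h := hA.trace_eq_sum_eigenvalues
  rw [htr] at h
  simpa using (congrArg Complex.re h).symm

lemma entropy_eq_neg_sum {ι : Type} [Fintype ι] [DecidableEq ι] {A : Matrix ι ι ℂ}
    (hA : A.IsHermitian) :
    entropy A = -∑ i, hA.eigenvalues i * Real.log (hA.eigenvalues i) := by
  rw [entropy, dif_pos hA]

lemma entropy_eq_log_of_mul_self {ι : Type} [Fintype ι] [DecidableEq ι] {A : Matrix ι ι ℂ}
    (hA : A.IsHermitian) {c : ℝ} (hAA : A * A = ((c⁻¹ : ℝ) : ℂ) • A) (htr : A.trace = 1) :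
    entropy A = Real.log c := by
  rw [entropy_eq_neg_sum hA]
  exact neg_sum_mul_log_eq_log (hA.eigenvalues_eq_zero_or_eq hAA) (sum_eigenvalues_eq_one hA htr)

lemma card_mul_le_norm_sq_of_pairwise_inner_eq_zero {𝕜 E ι : Type*} [RCLike 𝕜]
    [NormedAddCommGroup E] [InnerProductSpace 𝕜 E] [Fintype ι] {ψ : E} {v : ι → E} {r : ℝ}
    (horth : Pairwise fun j k => inner 𝕜 (v j) (v k) = 0)
    (hv : ∀ j, inner 𝕜 (v j) (v j) = (r : 𝕜)) (hψ : ∀ j, inner 𝕜 ψ (v j) = (r : 𝕜)) :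
    Fintype.card ι * r ≤ ‖ψ‖ ^ 2 := by
  set Φ := ∑ j, v j
  have hψΦ : inner 𝕜 ψ Φ = ((Fintype.card ι * r : ℝ) : 𝕜) := by
    simp [Φ, inner_sum, hψ]
  have hΦΦ : ‖Φ‖ ^ 2 = Fintype.card ι * r := by
    have : inner 𝕜 Φ Φ = ((Fintype.card ι * r : ℝ) : 𝕜) := by
      simp only [Φ, sum_inner, inner_sum]
      rw [Finset.sum_congr rfl fun k _ => Finset.sum_eq_single k
        (fun j _ hjk => horth hjk) (by simp)]
      simp only [hv, Finset.sum_const, Finset.card_univ, nsmul_eq_mul]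
      push_cast
      rfl
    rw [← RCLike.ofReal_inj (K := 𝕜), ← this, inner_self_eq_norm_sq_to_K]
    norm_cast
  have hcs : Fintype.card ι * r ≤ ‖ψ‖ * ‖Φ‖ := by
    have := norm_inner_le_norm (𝕜 := 𝕜) ψ Φ
    rw [hψΦ, RCLike.norm_ofReal] at this
    exact (le_abs_self _).trans this
  nlinarith [norm_nonneg ψ, norm_nonneg Φ]

lemma _root_.Fintype.sum_sum_update {ι κ M : Type*} [Fintype ι] [DecidableEq ι] [Fintype κ]
    [AddCommMonoid M] (j : ι) (G : (ι → κ) → κ → M) :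
    ∑ x, ∑ a, G (update x j a) (x j) = ∑ x, ∑ a, G x a := by
  have hinv : Involutive fun p : (ι → κ) × κ => (update p.1 j p.2, p.1 j) := by
    intro p
    simp
  simp only [← Fintype.sum_prod_type']
  exact Fintype.sum_equiv (hinv.toPerm _) _ _ fun p => rfl

lemma _root_.Fin.sum_pi_eq_sum_cons {M : ℕ} {α β : Type*} [Fintype α] [AddCommMonoid β]
    (g : (Fin (M + 1) → α) → β) : ∑ x, g x = ∑ w, ∑ z : Fin M → α, g (Fin.cons w z) := by
  rw [← Fintype.sum_prod_type']
  exact (Fintype.sum_equiv (Fin.consEquiv fun _ => α) _ _ fun _ => rfl).symm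

lemma star_dotProduct_self_eq_sum_norm_sq {ι : Type*} [Fintype ι] (u : ι → ℂ) :
    star u ⬝ᵥ u = ((∑ i, ‖u i‖ ^ 2 : ℝ) : ℂ) := by
  push_cast
  exact Fintype.sum_congr _ _ fun i => RCLike.conj_mul (u i)

section SlotProjection

variable {d n : ℕ}

def slotProj (f : Fin d → ℂ) (j : Fin n) (φ : (Fin n → Fin d) → ℂ) : (Fin n → Fin d) → ℂ :=
  fun x => f (x j) * ∑ a, star (f a) * φ (update x j a)

lemma star_slotProj_dotProduct (f : Fin d → ℂ) (j : Fin n) (φ χ : (Fin n → Fin d) → ℂ) :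
    star (slotProj f j φ) ⬝ᵥ χ = star φ ⬝ᵥ slotProj f j χ := by
  let G y b := star (f b) * f (y j) * star (φ y) * χ (update y j b)
  calc star (slotProj f j φ) ⬝ᵥ χ = ∑ x, ∑ a, G (update x j a) (x j) := by
        simp only [G, dotProduct, slotProj, Pi.star_apply, star_mul', star_sum, update_self,
          update_idem, update_eq_self, star_star]
        refine Fintype.sum_congr _ _ fun x => ?_
        rw [Finset.mul_sum, Finset.sum_mul]
        exact Fintype.sum_congr _ _ fun a => by ring
    _ = ∑ y, ∑ b, G y b := Fintype.sum_sum_update j G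
    _ = star φ ⬝ᵥ slotProj f j χ := by
        simp only [G, dotProduct, slotProj, Pi.star_apply, Finset.mul_sum]
        exact Fintype.sum_congr _ _ fun x => Fintype.sum_congr _ _ fun a => by ring

lemma slotProj_slotProj {f : Fin d → ℂ} (hf : star f ⬝ᵥ f = 1) (j : Fin n)
    (φ : (Fin n → Fin d) → ℂ) : slotProj f j (slotProj f j φ) = slotProj f j φ := by
  funext x
  simp only [slotProj, update_self, update_idem, ← mul_assoc, ← Finset.sum_mul]
  simp only [dotProduct, Pi.star_apply] at hf
  rw [hf, mul_one]

lemma IsAntisym.apply_comp_swap {ψ : (Fin n → Fin d) → ℂ} (hψ : IsAntisym d n ψ)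
    {j k : Fin n} (hjk : j ≠ k) (x : Fin n → Fin d) : ψ (x ∘ Equiv.swap j k) = -ψ x := by
  rw [hψ, Equiv.Perm.sign_swap hjk]
  simp

lemma IsAntisym.slotProj_slotProj_of_ne {ψ : (Fin n → Fin d) → ℂ} (hψ : IsAntisym d n ψ)
    (f : Fin d → ℂ) {j k : Fin n} (hjk : j ≠ k) : slotProj f j (slotProj f k ψ) = 0 := by
  funext x
  have hswap : ∀ a b, update (update x j a) k b ∘ Equiv.swap j k = update (update x j b) k a := by
    intro a b
    ext i
    rcases eq_or_ne i j with rfl | hij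
    · simp [hjk]
    rcases eq_or_ne i k with rfl | hik
    · simp [hjk]
    · simp [Equiv.swap_apply_of_ne_of_ne hij hik, hij, hik]
  let F a b := star (f a) * star (f b) * ψ (update (update x j a) k b)
  have hF : ∑ a, ∑ b, F a b = 0 := by
    have hanti : ∑ a, ∑ b, F a b = -∑ a, ∑ b, F a b := by
      conv_lhs => rw [Finset.sum_comm]
      simp only [← Finset.sum_neg_distrib]
      refine Fintype.sum_congr _ _ fun a => Fintype.sum_congr _ _ fun b => ?_
      simp only [F, ← hswap a b, hψ.apply_comp_swap hjk]
      ring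
    linear_combination hanti / 2
  calc slotProj f j (slotProj f k ψ) x = f (x j) * f (x k) * ∑ a, ∑ b, F a b := by
        simp only [slotProj, update_of_ne hjk.symm, F, Finset.mul_sum]
        exact Fintype.sum_congr _ _ fun a => Fintype.sum_congr _ _ fun b => by ring
    _ = 0 := by rw [hF, mul_zero]

lemma IsAntisym.star_dotProduct_slotProj_eq {ψ : (Fin n → Fin d) → ℂ}
    (hψ : IsAntisym d n ψ) (f : Fin d → ℂ) (j k : Fin n) :
    star ψ ⬝ᵥ slotProj f j ψ = star ψ ⬝ᵥ slotProj f k ψ := by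
  rcases eq_or_ne j k with rfl | hjk
  · rfl
  have hinv : Involutive fun x : Fin n → Fin d => x ∘ Equiv.swap j k := fun x => by
    ext
    simp
  have hupd : ∀ (x : Fin n → Fin d) a,
      update (x ∘ Equiv.swap j k) j a = update x k a ∘ Equiv.swap j k := by
    intro x a
    rw [update_comp_equiv, Equiv.symm_swap, Equiv.swap_apply_right]
  refine (Fintype.sum_equiv (hinv.toPerm _) _ _ fun x => ?_).symm
  simp only [Involutive.coe_toPerm, Pi.star_apply, slotProj, Function.comp_apply,
    Equiv.swap_apply_left, hupd, hψ.apply_comp_swap hjk, star_neg, mul_neg, Finset.sum_neg_distrib]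
  ring

end SlotProjection

lemma isHermitian_pureState {ι : Type} (ψ : ι → ℂ) : (pureState ψ).IsHermitian := by
  ext x y
  simp [pureState, mul_comm]

lemma isHermitian_ptrace {d N : ℕ} {ρ : Matrix (Fin N → Fin d) (Fin N → Fin d) ℂ}
    (hρ : ρ.IsHermitian) (k : ℕ) : (ptrace k ρ).IsHermitian := by
  refine IsHermitian.ext fun a b => ?_
  unfold ptrace
  rw [star_sum]
  exact Fintype.sum_congr _ _ fun z => hρ.apply _ _

section OneBody

variable {d M : ℕ}

def contractFirst (f : Fin d → ℂ) (ψ : (Fin (M + 1) → Fin d) → ℂ) : (Fin M → Fin d) → ℂ :=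
  fun z => ∑ w, star (f w) * ψ (Fin.cons w z)

lemma star_dotProduct_slotProj_zero (f : Fin d → ℂ) (ψ : (Fin (M + 1) → Fin d) → ℂ) :
    star ψ ⬝ᵥ slotProj f 0 ψ = star (contractFirst f ψ) ⬝ᵥ contractFirst f ψ := by
  simp only [dotProduct, slotProj, contractFirst, Fin.sum_pi_eq_sum_cons (M := M), Fin.cons_zero,
    Fin.update_cons_zero, Pi.star_apply, star_sum, star_mul', star_star]
  rw [Finset.sum_comm]
  refine Fintype.sum_congr _ _ fun z => ?_
  rw [Finset.sum_mul]
  exact Fintype.sum_congr _ _ fun w => by ring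

lemma IsAntisym.card_mul_norm_sq_contractFirst_le {ψ : (Fin (M + 1) → Fin d) → ℂ}
    (hψ : IsAntisym d (M + 1) ψ) {f : Fin d → ℂ} (hf : star f ⬝ᵥ f = 1) :
    (M + 1) * ∑ z, ‖contractFirst f ψ z‖ ^ 2 ≤ ∑ x, ‖ψ x‖ ^ 2 := by
  have hr : ∀ j, star ψ ⬝ᵥ slotProj f j ψ = ((∑ z, ‖contractFirst f ψ z‖ ^ 2 : ℝ) : ℂ) :=
    fun j => by
      rw [hψ.star_dotProduct_slotProj_eq f j 0, star_dotProduct_slotProj_zero,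
        star_dotProduct_self_eq_sum_norm_sq]
  have key := card_mul_le_norm_sq_of_pairwise_inner_eq_zero (𝕜 := ℂ) (ψ := WithLp.toLp 2 ψ)
    (v := fun j => WithLp.toLp 2 (slotProj f j ψ)) (r := ∑ z, ‖contractFirst f ψ z‖ ^ 2) ?_ ?_ ?_
  · rw [EuclideanSpace.norm_eq, Real.sq_sqrt (by positivity)] at key
    simpa using key
  · intro j k hjk
    rw [EuclideanSpace.inner_toLp_toLp, dotProduct_comm, star_slotProj_dotProduct,
      hψ.slotProj_slotProj_of_ne f hjk, dotProduct_zero]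
  · intro j
    rw [EuclideanSpace.inner_toLp_toLp, dotProduct_comm, star_slotProj_dotProduct,
      slotProj_slotProj hf]
    exact hr j
  · intro j
    rw [EuclideanSpace.inner_toLp_toLp, dotProduct_comm]
    exact hr j

lemma combine_one_eq_cons (a : Fin 1 → Fin d) (z : Fin (M + 1 - 1) → Fin d) :
    combine a z = Fin.cons (a 0) (z : Fin M → Fin d) := by
  ext i
  induction i using Fin.cases with
  | zero => simp [combine]
  | succ j => simp [combine, Fin.val_succ]

lemma ptrace_one_pureState_apply (ψ : (Fin (M + 1) → Fin d) → ℂ) (a b : Fin 1 → Fin d) :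
    ptrace 1 (pureState ψ) a b
      = ∑ z : Fin M → Fin d, ψ (Fin.cons (a 0) z) * star (ψ (Fin.cons (b 0) z)) := by
  simp only [ptrace, pureState, combine_one_eq_cons]
  rfl

lemma trace_ptrace_one_pureState (ψ : (Fin (M + 1) → Fin d) → ℂ) :
    (ptrace 1 (pureState ψ)).trace = star ψ ⬝ᵥ ψ := by
  simp only [trace, diag, ptrace_one_pureState_apply, dotProduct, Pi.star_apply,
    Fin.sum_pi_eq_sum_cons (M := M)]
  rw [← (Equiv.funUnique (Fin 1) (Fin d)).symm.sum_comp]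
  exact Fintype.sum_congr _ _ fun w => Fintype.sum_congr _ _ fun z => mul_comm _ _

lemma star_dotProduct_ptrace_one_pureState_mulVec (ψ : (Fin (M + 1) → Fin d) → ℂ)
    (v : (Fin 1 → Fin d) → ℂ) :
    star v ⬝ᵥ (ptrace 1 (pureState ψ) *ᵥ v)
      = star (contractFirst (v ∘ (Equiv.funUnique (Fin 1) (Fin d)).symm) ψ) ⬝ᵥ
          contractFirst (v ∘ (Equiv.funUnique (Fin 1) (Fin d)).symm) ψ := by
  have hC : ∀ z, contractFirst (v ∘ (Equiv.funUnique (Fin 1) (Fin d)).symm) ψ z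
      = ∑ a, star (v a) * ψ (Fin.cons (a 0) z) := fun z =>
    (Equiv.funUnique (Fin 1) (Fin d)).symm.sum_comp fun a => star (v a) * ψ (Fin.cons (a 0) z)
  simp only [dotProduct, mulVec, ptrace_one_pureState_apply, Pi.star_apply, hC, star_sum,
    star_mul', star_star, Finset.mul_sum, Finset.sum_mul]
  refine (Fintype.sum_congr _ _ fun a => Finset.sum_comm).trans (Finset.sum_comm.trans ?_)
  exact Fintype.sum_congr _ _ fun z => Fintype.sum_congr _ _ fun a =>
    Fintype.sum_congr _ _ fun b => by ring

lemma eigenvalues_ptrace_one_pureState_eq {ψ : (Fin (M + 1) → Fin d) → ℂ}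
    (hγ : (ptrace 1 (pureState ψ)).IsHermitian) (i : Fin 1 → Fin d) :
    hγ.eigenvalues i = ∑ z, ‖contractFirst
      (⇑(hγ.eigenvectorBasis i) ∘ (Equiv.funUnique (Fin 1) (Fin d)).symm) ψ z‖ ^ 2 := by
  rw [hγ.eigenvalues_eq, star_dotProduct_ptrace_one_pureState_mulVec,
    star_dotProduct_self_eq_sum_norm_sq, RCLike.re_to_complex, Complex.ofReal_re]

lemma IsAntisym.mul_eigenvalues_ptrace_one_le {ψ : (Fin (M + 1) → Fin d) → ℂ}
    (hψ : IsAntisym d (M + 1) ψ) (hγ : (ptrace 1 (pureState ψ)).IsHermitian)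
    (i : Fin 1 → Fin d) : (M + 1) * hγ.eigenvalues i ≤ ∑ x, ‖ψ x‖ ^ 2 := by
  rw [eigenvalues_ptrace_one_pureState_eq]
  refine hψ.card_mul_norm_sq_contractFirst_le ?_
  have hunit := orthonormal_iff_ite.mp hγ.eigenvectorBasis.orthonormal i i
  rw [if_pos rfl, EuclideanSpace.inner_eq_star_dotProduct, dotProduct_comm] at hunit
  rw [← hunit]
  exact (Equiv.funUnique (Fin 1) (Fin d)).symm.sum_comp fun a =>
    star (hγ.eigenvectorBasis i a) * hγ.eigenvectorBasis i a

theorem IsAntisym.log_le_entropy_ptrace_one {ψ : (Fin (M + 1) → Fin d) → ℂ}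
    (hψ : IsAntisym d (M + 1) ψ) (hunit : ∑ x, ‖ψ x‖ ^ 2 = 1) :
    Real.log (M + 1) ≤ entropy (ptrace 1 (pureState ψ)) := by
  have hγ := isHermitian_ptrace (isHermitian_pureState ψ) 1
  rw [entropy_eq_neg_sum hγ]
  refine log_le_neg_sum_mul_log (by positivity) (fun i => ?_) (fun i => ?_)
    (sum_eigenvalues_eq_one hγ ?_)
  · rw [eigenvalues_ptrace_one_pureState_eq]
    positivity
  · simpa [hunit] using hψ.mul_eigenvalues_ptrace_one_le hγ i
  · rw [trace_ptrace_one_pureState, star_dotProduct_self_eq_sum_norm_sq, hunit,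
      Complex.ofReal_one]

end OneBody

section Projection

variable {κ ι : Type*} [Fintype κ] [DecidableEq κ] [Fintype ι] {u : κ → ι → ℂ}

lemma sum_vecMulVec_mul_self (hu : ∀ k l, star (u k) ⬝ᵥ u l = if k = l then 1 else 0) :
    (∑ k, vecMulVec (u k) (star (u k))) * ∑ k, vecMulVec (u k) (star (u k)) =
      ∑ k, vecMulVec (u k) (star (u k)) := by
  simp only [Finset.sum_mul, Finset.mul_sum, vecMulVec_mul_vecMulVec, hu]
  refine Fintype.sum_congr _ _ fun l => ?_
  rw [Finset.sum_eq_single l (fun k _ hkl => by simp [hkl]) (by simp)]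
  simp

lemma trace_sum_vecMulVec (hu : ∀ k l, star (u k) ⬝ᵥ u l = if k = l then 1 else 0) :
    (∑ k, vecMulVec (u k) (star (u k))).trace = Fintype.card κ := by
  simp [trace_sum, trace_vecMulVec, dotProduct_comm (u _), hu]

end Projection

lemma _root_.Orthonormal.sum_mul_star {𝕜 ι κ : Type*} [RCLike 𝕜] [Fintype ι] [DecidableEq κ]
    {φ : κ → EuclideanSpace 𝕜 ι} (hφ : Orthonormal 𝕜 φ) (j k : κ) :
    ∑ w, φ j w * star (φ k w) = if k = j then 1 else 0 :=
  (orthonormal_iff_ite.mp hφ k j).symm ▸ rfl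

lemma _root_.Orthonormal.sum_prod_mul_star {𝕜 ι κ μ : Type*} [RCLike 𝕜] [Fintype ι] [Fintype μ]
    [DecidableEq μ] [DecidableEq κ] {φ : κ → EuclideanSpace 𝕜 ι} (hφ : Orthonormal 𝕜 φ)
    (g h : μ → κ) :
    ∑ z : μ → ι, ∏ i, φ (g i) (z i) * star (φ (h i) (z i)) = if h = g then 1 else 0 := by
  rw [← Fintype.prod_sum (fun i w => φ (g i) w * star (φ (h i) w))]
  simp only [hφ.sum_mul_star, Fintype.prod_boole, funext_iff]

lemma _root_.Equiv.Perm.eq_of_apply_succ_eq {M : ℕ} {σ τ : Equiv.Perm (Fin (M + 1))}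
    (hsucc : ∀ i : Fin M, σ i.succ = τ i.succ) : σ = τ := by
  have h0 : σ 0 = τ 0 := by
    obtain ⟨j, hj⟩ := σ.surjective (τ 0)
    induction j using Fin.cases with
    | zero => exact hj
    | succ i =>
      rw [hsucc i] at hj
      exact absurd (τ.injective hj) (Fin.succ_ne_zero i)
  refine Equiv.ext fun j => ?_
  induction j using Fin.cases with
  | zero => rw [h0]
  | succ i => exact hsucc i

lemma _root_.Equiv.Perm.sum_apply_zero {M : ℕ} {β : Type*} [AddCommMonoid β]
    (F : Fin (M + 1) → β) :
    ∑ σ : Equiv.Perm (Fin (M + 1)), F (σ 0) = M.factorial • ∑ k, F k := by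
  rw [← Equiv.Perm.decomposeFin.symm.sum_comp, Fintype.sum_prod_type, Finset.smul_sum]
  simp [Equiv.Perm.decomposeFin_symm_apply_zero, Fintype.card_perm]

lemma _root_.Matrix.vecMul_dotProduct_star_vecMul {κ ι : Type*} [Fintype κ] [Fintype ι]
    [DecidableEq κ] {P : Matrix κ ι ℂ} (hP : P * Pᴴ = 1) (x y : κ → ℂ) :
    x ᵥ* P ⬝ᵥ star (y ᵥ* P) = x ⬝ᵥ star y := by
  rw [star_vecMul, dotProduct_mulVec, vecMul_vecMul, hP, vecMul_one]

section Slater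

variable {d M : ℕ}

def slaterTail (φ : Fin (M + 1) → EuclideanSpace ℂ (Fin d)) :
    Matrix (Equiv.Perm (Fin (M + 1))) (Fin M → Fin d) ℂ :=
  of fun σ z => ∏ i, φ (σ i.succ) (z i)

lemma slater_cons (φ : Fin (M + 1) → EuclideanSpace ℂ (Fin d)) (w : Fin d)
    (z : Fin M → Fin d) :
    slater d (M + 1) φ (Fin.cons w z) = ((Real.sqrt (M + 1).factorial : ℝ) : ℂ)⁻¹ *
      ((fun σ => ((Equiv.Perm.sign σ : ℤ) : ℂ) * φ (σ 0) w) ᵥ* slaterTail φ) z := by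
  simp only [slater, slaterTail, Fin.prod_univ_succ, vecMul, dotProduct, of_apply, mul_assoc,
    Fin.cons_zero, Fin.cons_succ]

lemma slaterTail_mul_conjTranspose {φ : Fin (M + 1) → EuclideanSpace ℂ (Fin d)}
    (hφ : Orthonormal ℂ φ) : slaterTail φ * (slaterTail φ)ᴴ = 1 := by
  ext σ τ
  rw [mul_apply]
  simp only [slaterTail, conjTranspose_apply, of_apply, star_prod, ← Finset.prod_mul_distrib]
  rw [hφ.sum_prod_mul_star (fun i : Fin M => σ i.succ) (fun i => τ i.succ)]
  by_cases h : σ = τ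
  · subst h
    rw [if_pos rfl, one_apply_eq]
  · rw [one_apply_ne h, if_neg fun h' => h (Equiv.Perm.eq_of_apply_succ_eq fun i =>
      (congrFun h' i).symm)]

lemma ptrace_one_pureState_slater {φ : Fin (M + 1) → EuclideanSpace ℂ (Fin d)}
    (hφ : Orthonormal ℂ φ) :
    ptrace 1 (pureState (slater d (M + 1) φ)) =
      ((M + 1 : ℂ))⁻¹ • ∑ k, vecMulVec (fun a => φ k (a 0)) (star fun a => φ k (a 0)) := by
  ext a b
  set c : ℂ := ((Real.sqrt (M + 1).factorial : ℝ) : ℂ)⁻¹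
  have hc : c * star c = (((M + 1).factorial : ℂ))⁻¹ := by
    simp only [c, star_inv₀, Complex.star_def, Complex.conj_ofReal, ← mul_inv,
      ← Complex.ofReal_mul, Real.mul_self_sqrt (Nat.cast_nonneg _), Complex.ofReal_natCast]
  let x : Fin d → Equiv.Perm (Fin (M + 1)) → ℂ := fun w σ => Equiv.Perm.sign σ * φ (σ 0) w
  calc ptrace 1 (pureState (slater d (M + 1) φ)) a b
      = c * star c * (x (a 0) ᵥ* slaterTail φ ⬝ᵥ star (x (b 0) ᵥ* slaterTail φ)) := by
        rw [ptrace_one_pureState_apply]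
        simp only [slater_cons, dotProduct, Finset.mul_sum, star_mul', Pi.star_apply]
        exact Fintype.sum_congr _ _ fun z => by ring
    _ = c * star c * ∑ σ : Equiv.Perm (Fin (M + 1)), φ (σ 0) (a 0) * star (φ (σ 0) (b 0)) := by
        rw [vecMul_dotProduct_star_vecMul (slaterTail_mul_conjTranspose hφ)]
        simp only [x, dotProduct, Pi.star_apply, star_mul', star_intCast]
        refine congrArg _ (Fintype.sum_congr _ _ fun σ => ?_)
        have hsign : ((Equiv.Perm.sign σ : ℤ) : ℂ) * (Equiv.Perm.sign σ : ℤ) = 1 := by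
          rcases Int.units_eq_one_or (Equiv.Perm.sign σ) with h | h <;> simp [h]
        linear_combination (φ (σ 0) (a 0) * star (φ (σ 0) (b 0))) * hsign
    _ = _ := by
        rw [Equiv.Perm.sum_apply_zero fun k => φ k (a 0) * star (φ k (b 0)), hc]
        simp only [Matrix.smul_apply, Matrix.sum_apply, vecMulVec_apply, Pi.star_apply,
          smul_eq_mul, nsmul_eq_mul, Nat.factorial_succ]
        have hM : (M.factorial : ℂ) ≠ 0 := Nat.cast_ne_zero.mpr M.factorial_ne_zero
        push_cast
        field_simp

theorem entropy_ptrace_one_pureState_slater {φ : Fin (M + 1) → EuclideanSpace ℂ (Fin d)}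
    (hφ : Orthonormal ℂ φ) :
    entropy (ptrace 1 (pureState (slater d (M + 1) φ))) = Real.log (M + 1) := by
  let u : Fin (M + 1) → (Fin 1 → Fin d) → ℂ := fun k a => φ k (a 0)
  have hu : ∀ k l, star (u k) ⬝ᵥ u l = if k = l then 1 else 0 := fun k l => by
    rw [← hφ.sum_mul_star l k]
    exact ((Equiv.funUnique (Fin 1) (Fin d)).sum_comp fun w => star (φ k w) * φ l w).trans
      (Fintype.sum_congr _ _ fun w => mul_comm _ _)
  have hM : (M + 1 : ℂ) ≠ 0 := by exact_mod_cast M.succ_ne_zero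
  refine entropy_eq_log_of_mul_self (isHermitian_ptrace (isHermitian_pureState _) 1) ?_ ?_
  · rw [ptrace_one_pureState_slater hφ, smul_mul_smul_comm, sum_vecMulVec_mul_self hu, smul_smul]
    push_cast
    rfl
  · rw [ptrace_one_pureState_slater hφ, trace_smul, trace_sum_vecMulVec hu, smul_eq_mul]
    simp [hM]

end Slater

theorem coleman_general (d N : ℕ) (hN : 1 ≤ N)
    (ψ : (Fin N → Fin d) → ℂ) (hanti : IsAntisym d N ψ)
    (hunit : ∑ x : Fin N → Fin d, ‖ψ x‖ ^ 2 = 1) :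
    Real.log (N : ℝ) ≤ entropy (ptrace 1 (pureState ψ)) ∧
    ∀ φ : Fin N → EuclideanSpace ℂ (Fin d), Orthonormal ℂ φ →
      entropy (ptrace 1 (pureState (slater d N φ))) = Real.log (N : ℝ) := by
  obtain ⟨M, rfl⟩ : ∃ M, N = M + 1 := ⟨N - 1, by omega⟩
  push_cast
  exact ⟨hanti.log_le_entropy_ptrace_one hunit,
    fun _ hφ => entropy_ptrace_one_pureState_slater hφ⟩

/-- **Coleman's theorem:** for a fermionic pure state on `Λ^N ℂ^d`, the one-body reduced
density matrix satisfies `S(γ_1) ≥ log N`, with equality for Slater determinants. -/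
theorem coleman (d N : ℕ) (hN : 1 ≤ N) (hNd : N ≤ d)
    (ψ : (Fin N → Fin d) → ℂ) (hanti : IsAntisym d N ψ)
    (hunit : ∑ x : Fin N → Fin d, ‖ψ x‖ ^ 2 = 1) :
    Real.log (N : ℝ) ≤ entropy (ptrace 1 (pureState ψ)) ∧
    ∀ φ : Fin N → EuclideanSpace ℂ (Fin d), Orthonormal ℂ φ →
      entropy (ptrace 1 (pureState (slater d N φ))) = Real.log (N : ℝ) :=
  coleman_general d N hN ψ hanti hunit

end

end Fermionic
end
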